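/- Let μ > 0, and for R > 0 consider a, b ∈ ℂ satisfying ∫_{-R}^{R} |a e^{μu} + b e^{-μu}|² du ≤ 1. Then for R sufficiently large (depending only on μ), (|a|² + |b|²) e^{2μR} ≤ 8μ, so that |a e^{μ·0} + b e^{-μ·0}| = |a + b| ≤ c₁ e^{-c₂ R} for constants c₁, c₂ > 0 depending only on μ. -/

import Mathlib

open Real

lemma integral_exp_mul' {c : ℝ} (hc : c ≠ 0) (A B : ℝ) :
    ∫ u in A..B, Real.exp (c * u) = (Real.exp (c * B) - Real.exp (c * A)) / c := by
  have h : ∀ u : ℝ, HasDerivAt (fun u => Real.exp (c * u) / c) (Real.exp (c * u)) u := by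
    intro u
    have h0 : HasDerivAt (fun u => Real.exp (c * u) / c) (Real.exp (c * u) * (c * 1) / c) u :=
      (((hasDerivAt_id u).const_mul c).exp).div_const c
    convert h0 using 1
    field_simp
  rw [intervalIntegral.integral_eq_sub_of_hasDerivAt (fun u _ => h u)
    ((Real.continuous_exp.comp (continuous_const.mul continuous_id)).intervalIntegrable A B)]
  ring

set_option maxHeartbeats 1600000 in
/-- One-mode estimate on a long symmetric cylinder `[-R,R]`: for `R` large (depending
only on `μ`), any `a, b` with `∫_{-R}^R |a e^{μu} + b e^{-μu}|² du ≤ 1` satisfy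
`(|a|² + |b|²) e^{2μR} ≤ 8μ`, hence `|a + b| ≤ c₁ e^{-c₂ R}` with `c₁, c₂ > 0`
depending only on `μ`. -/
theorem cylinder_midpoint_decay (μ : ℝ) (hμ : 0 < μ) :
    ∃ R₀ c₁ c₂ : ℝ, 0 < c₁ ∧ 0 < c₂ ∧
      ∀ R : ℝ, R₀ ≤ R → ∀ a b : ℂ,
        (∫ u in (-R)..R,
            (‖a * (Real.exp (μ * u) : ℂ) + b * (Real.exp (-(μ * u)) : ℂ)‖)^2) ≤ 1 →
        ((‖a‖)^2 + (‖b‖)^2) * Real.exp (2 * μ * R) ≤ 8 * μ ∧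
        ‖a + b‖ ≤ c₁ * Real.exp (-(c₂ * R)) := by
  refine ⟨6 / μ, 4 * Real.sqrt μ, μ, by positivity, hμ, ?_⟩
  intro R hR a b hint
  have hR0 : 0 < R := lt_of_lt_of_le (by positivity) hR
  set S : ℝ := (‖a‖)^2 + (‖b‖)^2 with hS
  clear_value S
  set x : ℝ := 2 * μ * R with hxdef
  clear_value x
  set c : ℝ := (a * (starRingEnd ℂ) b).re with hc
  clear_value c
  have hS0 : 0 ≤ S := by rw [hS]; positivity
  have hx12 : 12 ≤ x := by
    have h6 : 6 ≤ μ * R := by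
      rw [div_le_iff₀ hμ] at hR; linarith
    rw [hxdef]; nlinarith
  have hx0 : 0 < x := by linarith
  -- pointwise identity
  have hpt : ∀ u : ℝ,
      (‖a * (Real.exp (μ * u) : ℂ) + b * (Real.exp (-(μ * u)) : ℂ)‖)^2
      = (‖a‖)^2 * Real.exp (2 * μ * u)
        + (‖b‖)^2 * Real.exp (-(2 * μ) * u) + 2 * c := by
    intro u
    have h1 : (Real.exp (μ * u) : ℂ) * (Real.exp (-(μ * u)) : ℂ) = 1 := by
      rw [← Complex.ofReal_mul, ← Real.exp_add]; simp
    have e2 : Real.exp (μ * u) * Real.exp (μ * u) = Real.exp (2 * μ * u) := by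
      rw [← Real.exp_add]; ring_nf
    have e3 : Real.exp (-(μ * u)) * Real.exp (-(μ * u)) = Real.exp (-(2 * μ) * u) := by
      rw [← Real.exp_add]; ring_nf
    simp only [Complex.sq_norm, Complex.normSq_add, Complex.normSq_mul,
      Complex.normSq_ofReal, map_mul, Complex.conj_ofReal]
    have hre : (a * ↑(Real.exp (μ * u)) * ((starRingEnd ℂ) b * ↑(Real.exp (-(μ * u))))).re
        = c := by
      have h2 : a * ↑(Real.exp (μ * u)) * ((starRingEnd ℂ) b * ↑(Real.exp (-(μ * u))))
          = a * (starRingEnd ℂ) b * ((Real.exp (μ * u) : ℂ) * (Real.exp (-(μ * u)) : ℂ)) := by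
        ring
      rw [h2, h1, mul_one, hc]
    rw [hre, e2, e3]
  -- integral computation
  have hInt : (∫ u in (-R)..R,
      (‖a * (Real.exp (μ * u) : ℂ) + b * (Real.exp (-(μ * u)) : ℂ)‖)^2)
      = S * ((Real.exp x - Real.exp (-x)) / (2 * μ)) + 4 * c * R := by
    have hcont1 : Continuous fun u : ℝ => Real.exp (2 * μ * u) :=
      Real.continuous_exp.comp (continuous_const.mul continuous_id)
    have hcont2 : Continuous fun u : ℝ => Real.exp (-(2 * μ) * u) :=
      Real.continuous_exp.comp (continuous_const.mul continuous_id)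
    rw [intervalIntegral.integral_congr (g := fun u =>
      (‖a‖)^2 * Real.exp (2 * μ * u)
        + (‖b‖)^2 * Real.exp (-(2 * μ) * u) + 2 * c)
      (fun u _ => hpt u)]
    rw [intervalIntegral.integral_add (f := fun u : ℝ => (‖a‖)^2 * Real.exp (2 * μ * u)
          + (‖b‖)^2 * Real.exp (-(2 * μ) * u)) (g := fun _ => 2 * c) (((((continuous_const.mul hcont1)).add
        ((continuous_const.mul hcont2))) : Continuous fun u : ℝ => (‖a‖)^2 * Real.exp (2 * μ * u)
          + (‖b‖)^2 * Real.exp (-(2 * μ) * u)).intervalIntegrable _ _)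
        (intervalIntegrable_const),
      intervalIntegral.integral_add (f := fun u : ℝ => (‖a‖)^2 * Real.exp (2 * μ * u))
        (g := fun u : ℝ => (‖b‖)^2 * Real.exp (-(2 * μ) * u)) (((continuous_const.mul hcont1 : Continuous fun u : ℝ =>
          (‖a‖)^2 * Real.exp (2 * μ * u))).intervalIntegrable _ _)
        (((continuous_const.mul hcont2 : Continuous fun u : ℝ =>
          (‖b‖)^2 * Real.exp (-(2 * μ) * u))).intervalIntegrable _ _),
      intervalIntegral.integral_const_mul, intervalIntegral.integral_const_mul,
      intervalIntegral.integral_const,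
      integral_exp_mul' (by positivity : (2:ℝ) * μ ≠ 0),
      integral_exp_mul' (neg_ne_zero.mpr (by positivity) : -((2:ℝ) * μ) ≠ 0)]
    rw [hS, hxdef]
    simp only [smul_eq_mul]
    field_simp
    ring
  -- cross-term bound
  have hcb : |c| ≤ S / 2 := by
    have h1 : |c| ≤ ‖a‖ * ‖b‖ := by
      calc |c| = |(a * (starRingEnd ℂ) b).re| := by rw [hc]
        _ ≤ ‖a * (starRingEnd ℂ) b‖ := Complex.abs_re_le_norm _
        _ = ‖a‖ * ‖b‖ := by rw [norm_mul, Complex.norm_conj]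
    rw [hS]
    nlinarith [sq_nonneg (‖a‖ - ‖b‖)]
  have hexp : x ^ 2 / 4 + x + 1 ≤ Real.exp x := by
    have h := Real.add_one_le_exp (x / 2)
    have h2 : Real.exp x = Real.exp (x / 2) ^ 2 := by
      rw [sq, ← Real.exp_add]; congr 1; ring
    nlinarith [Real.exp_pos (x / 2)]
  have hexpneg : Real.exp (-x) ≤ 1 := by
    rw [Real.exp_le_one_iff]; linarith
  have hE4x : 4 * x ≤ Real.exp x - Real.exp (-x) := by nlinarith
  set E : ℝ := (Real.exp x - Real.exp (-x)) / (2 * μ) with hE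
  clear_value E
  have hEpos : 0 < E := by
    rw [hE]; apply div_pos; · nlinarith
    · positivity
  have h4R : 4 * R ≤ E := by
    rw [hE, le_div_iff₀ (by positivity : (0:ℝ) < 2 * μ)]
    calc 4 * R * (2 * μ) = 4 * x := by rw [hxdef]; ring
      _ ≤ _ := hE4x
  -- main inequality
  have hmain : S * E ≤ 2 := by
    have h1 : S * E + 4 * c * R ≤ 1 := by rw [← hInt]; exact hint
    have h2 : -(S * E / 2) ≤ 4 * c * R := by
      have h3 : 4 * |c| * R ≤ S * E / 2 := by
        calc 4 * |c| * R ≤ 4 * (S / 2) * R := by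
              apply mul_le_mul_of_nonneg_right _ hR0.le
              apply mul_le_mul_of_nonneg_left hcb (by norm_num)
          _ = S / 2 * (4 * R) := by ring
          _ ≤ S / 2 * E := mul_le_mul_of_nonneg_left h4R (by linarith)
          _ = S * E / 2 := by ring
      have habs : -|c| ≤ c := neg_abs_le c
      nlinarith [abs_nonneg c]
    linarith
  have hprod : Real.exp x * Real.exp (-x) = 1 := by
    rw [← Real.exp_add]; simp
  have hexpge2 : 2 ≤ Real.exp x := by nlinarith
  have hkey : S * Real.exp x ≤ 8 * μ := by
    have h1 : S * (Real.exp x - Real.exp (-x)) ≤ 4 * μ := by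
      have heq : S * (Real.exp x - Real.exp (-x)) = 2 * μ * (S * E) := by
        rw [hE]; field_simp
      rw [heq]; nlinarith
    have hhalf : Real.exp (-x) ≤ 1 / 2 := by
      rw [Real.exp_neg]
      calc (Real.exp x)⁻¹ ≤ 2⁻¹ := inv_anti₀ (by norm_num) hexpge2
        _ = 1 / 2 := by norm_num
    have h2 : Real.exp x ≤ 2 * (Real.exp x - Real.exp (-x)) := by linarith
    have h3 := mul_le_mul_of_nonneg_left h2 hS0
    have h4 : S * (2 * (Real.exp x - Real.exp (-x))) = 2 * (S * (Real.exp x - Real.exp (-x))) := by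
      ring
    linarith
  constructor
  · exact hkey
  · have hab2 : (‖a + b‖)^2 ≤ 2 * S := by
      have h1 : ‖a + b‖ ≤ ‖a‖ + ‖b‖ :=
        norm_add_le a b
      have h3 : ‖a + b‖ ^ 2 ≤ (‖a‖ + ‖b‖) ^ 2 :=
        pow_le_pow_left₀ (norm_nonneg _) h1 2
      have key2 : ∀ p q : ℝ, (p + q)^2 ≤ 2 * (p^2 + q^2) := by
        intro p q; nlinarith [sq_nonneg (p - q)]
      rw [hS]
      linarith [h3, key2 (‖a‖) (‖b‖)]
    have h2S : 2 * S ≤ 16 * μ * Real.exp (-x) := by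
      have hstep : S * Real.exp x * Real.exp (-x) ≤ 8 * μ * Real.exp (-x) :=
        mul_le_mul_of_nonneg_right hkey (Real.exp_pos (-x)).le
      calc 2 * S = 2 * (S * Real.exp x * Real.exp (-x)) := by
            rw [mul_assoc S, hprod, mul_one]
        _ ≤ 2 * (8 * μ * Real.exp (-x)) := by linarith
        _ = 16 * μ * Real.exp (-x) := by ring
    have hgoal2 : (‖a + b‖)^2 ≤ (4 * Real.sqrt μ * Real.exp (-(μ * R)))^2 := by
      have h1 : Real.sqrt μ ^ 2 = μ := Real.sq_sqrt hμ.le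
      have h2 : Real.exp (-(μ * R)) ^ 2 = Real.exp (-x) := by
        rw [sq, ← Real.exp_add, hxdef]; congr 1; ring
      have h3 : (4 * Real.sqrt μ * Real.exp (-(μ * R)))^2 = 16 * μ * Real.exp (-x) := by
        rw [mul_pow, mul_pow, h1, h2]; ring
      rw [h3]; linarith
    calc ‖a + b‖
        = Real.sqrt ((‖a + b‖)^2) := (Real.sqrt_sq (norm_nonneg _)).symm
      _ ≤ Real.sqrt ((4 * Real.sqrt μ * Real.exp (-(μ * R)))^2) := Real.sqrt_le_sqrt hgoal2
      _ = 4 * Real.sqrt μ * Real.exp (-(μ * R)) := Real.sqrt_sq (by positivity)
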